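/- arXiv:2511.00302 — 4 statements merged into one kernel-verified Lean document; each statement's English description precedes it below -/
import Mathlib

section
/- The CCM nonlinearity preserves the Hardy space: let u : ℝ → ℂ be a Schwartz function with û(ξ) = 0 for every ξ < 0. Then the function N(x) := u(x) · (P₊(∂_x(|u|²)))(x), where |u|² = u·conj(u) is Schwartz and ∂_x denotes the derivative, is a Schwartz function whose Fourier transform vanishes at every ξ < 0. -/
open MeasureTheory Complex

/-- The Fourier transform, normalized as `ĝ(ξ) = (2π)^{-1/2} ∫ g(y) e^{-iyξ} dy`. -/
noncomputable def FT (f : ℝ → ℂ) (ξ : ℝ) : ℂ :=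
  (Real.sqrt (2 * Real.pi))⁻¹ • ∫ x : ℝ, f x * Complex.exp (-(Complex.I * x * ξ))

/-- The positive-frequency (Szegő) projection
`(P₊g)(x) = (2π)^{-1/2} ∫_0^∞ ĝ(ξ) e^{ixξ} dξ`. -/
noncomputable def Pplus (g : ℝ → ℂ) (x : ℝ) : ℂ :=
  (Real.sqrt (2 * Real.pi))⁻¹ • ∫ ξ in Set.Ioi (0 : ℝ), FT g ξ * Complex.exp (Complex.I * x * ξ)

open Real FourierTransform

lemma FT_eq (f : ℝ → ℂ) (ξ : ℝ) :
    FT f ξ = (Real.sqrt (2 * Real.pi))⁻¹ • 𝓕 f (ξ / (2 * Real.pi)) := by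
  rw [FT, Real.fourier_real_eq_integral_exp_smul]
  congr 1
  have : (fun x : ℝ => f x * Complex.exp (-(Complex.I * x * ξ)))
      = fun v : ℝ => Complex.exp (↑(-2 * Real.pi * v * (ξ / (2 * Real.pi))) * Complex.I) • f v := by
    funext x
    have h1 : (-2 * Real.pi * x * (ξ / (2 * Real.pi)) : ℝ) = -(x * ξ) := by
      field_simp
    rw [h1, smul_eq_mul, mul_comm]
    congr 1
    push_cast
    ring_nf
  rw [this]

lemma schwartz_hasTemperateGrowth (f : SchwartzMap ℝ ℂ) :
    Function.HasTemperateGrowth (⇑f) := by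
  refine ⟨f.smooth', fun n => ?_⟩
  rcases f.decay' 0 n with ⟨C, hC⟩
  exact ⟨0, C, fun x => by simpa using (show ‖x‖ ^ 0 * ‖iteratedFDeriv ℝ n (⇑f) x‖ ≤ C from hC x)⟩

lemma schwartz_integrable_pow_smul (G : SchwartzMap ℝ ℂ) (n : ℕ) :
    Integrable (fun s : ℝ => s ^ n • G s) := by
  refine (G.integrable_pow_mul volume n).mono'
    (((continuous_pow n).smul G.continuous).aestronglyMeasurable) ?_
  filter_upwards with s
  simp [norm_smul, abs_pow]

lemma integrable_pow_smul_comp {h : ℝ → ℂ} (hint : ∀ n : ℕ, Integrable (fun t => t ^ n • h t))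
    {a : ℝ} (ha : a ≠ 0) (C : ℝ) (n : ℕ) :
    Integrable (fun t : ℝ => t ^ n • (C • h (a * t))) := by
  have h1 : Integrable (fun t => (fun s => s ^ n • h s) (a * t)) := (hint n).comp_mul_left' ha
  have h2 : (fun t : ℝ => t ^ n • (C • h (a * t)))
      = fun t => ((a ^ n)⁻¹ * C) • ((a * t) ^ n • h (a * t)) := by
    funext t
    rw [smul_smul, smul_smul]
    congr 1
    rw [mul_pow]
    field_simp
  rw [h2]
  exact h1.fun_smul _

lemma FT_schwartz_eq (g : SchwartzMap ℝ ℂ) :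
    FT ⇑g = fun ξ : ℝ => (Real.sqrt (2 * Real.pi))⁻¹ •
      (SchwartzMap.fourierTransformCLM ℂ g) ((2 * Real.pi)⁻¹ * ξ) := by
  funext ξ
  rw [FT_eq, SchwartzMap.fourierTransformCLM_apply, div_eq_inv_mul, SchwartzMap.fourier_coe]

lemma FT_schwartz_continuous (g : SchwartzMap ℝ ℂ) : Continuous (FT ⇑g) := by
  rw [FT_schwartz_eq]
  exact (((SchwartzMap.fourierTransformCLM ℂ g).continuous).comp
    (continuous_const.mul continuous_id)).fun_const_smul _

lemma integrable_pow_smul_FT (g : SchwartzMap ℝ ℂ) (n : ℕ) :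
    Integrable (fun t : ℝ => t ^ n • FT (⇑g) t) := by
  rw [FT_schwartz_eq]
  exact integrable_pow_smul_comp (schwartz_integrable_pow_smul _)
    (by positivity : ((2 * Real.pi)⁻¹ : ℝ) ≠ 0) _ n

/-- The sharp frequency cutoff of `FT g` to positive frequencies. -/
noncomputable def hfun (g : ℝ → ℂ) : ℝ → ℂ := Set.indicator (Set.Ioi 0) (FT g)

lemma hfun_stronglyMeasurable (g : SchwartzMap ℝ ℂ) : StronglyMeasurable (hfun ⇑g) :=
  (FT_schwartz_continuous g).stronglyMeasurable.indicator measurableSet_Ioi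

lemma integrable_pow_smul_hfun (g : SchwartzMap ℝ ℂ) (n : ℕ) :
    Integrable (fun t : ℝ => t ^ n • hfun (⇑g) t) := by
  have h2 : (fun t : ℝ => t ^ n • hfun (⇑g) t)
      = Set.indicator (Set.Ioi 0) (fun t => t ^ n • FT (⇑g) t) := by
    funext t
    by_cases ht : t ∈ Set.Ioi (0 : ℝ) <;>
      simp [hfun, Set.indicator_of_mem, Set.indicator_of_notMem, ht]
  rw [h2]
  exact (integrable_pow_smul_FT g n).indicator measurableSet_Ioi

lemma sqrt_two_pi_ne : Real.sqrt (2 * Real.pi) ≠ 0 :=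
  ne_of_gt (Real.sqrt_pos.mpr (by positivity))

lemma sqrt_mul_inv_two_pi :
    Real.sqrt (2 * Real.pi) * (2 * Real.pi)⁻¹ = (Real.sqrt (2 * Real.pi))⁻¹ := by
  have h : Real.sqrt (2 * Real.pi) * Real.sqrt (2 * Real.pi) = 2 * Real.pi :=
    Real.mul_self_sqrt (by positivity)
  refine eq_inv_of_mul_eq_one_left ?_
  calc Real.sqrt (2 * Real.pi) * (2 * Real.pi)⁻¹ * Real.sqrt (2 * Real.pi)
      = Real.sqrt (2 * Real.pi) * Real.sqrt (2 * Real.pi) * (2 * Real.pi)⁻¹ := by ring_nf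
    _ = 2 * Real.pi * (2 * Real.pi)⁻¹ := by rw [h]
    _ = 1 := mul_inv_cancel₀ (by positivity)

/-- `P₊ g` is the (mathlib-normalized) Fourier integral of a rescaled cutoff function. -/
lemma Pplus_eq_fourierIntegral (g : ℝ → ℂ) :
    Pplus g = 𝓕 (fun t : ℝ => Real.sqrt (2 * Real.pi) • hfun g (-(2 * Real.pi) * t)) := by
  funext x
  set F₁ : ℝ → ℂ := fun s => Complex.exp (↑(s * x) * Complex.I) • hfun g s with hF₁
  have hRHS : 𝓕 (fun t : ℝ => Real.sqrt (2 * Real.pi) • hfun g (-(2 * Real.pi) * t)) x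
      = (Real.sqrt (2 * Real.pi))⁻¹ • ∫ s : ℝ, F₁ s := by
    rw [Real.fourier_real_eq_integral_exp_smul]
    have h1 : (fun v : ℝ => Complex.exp (↑(-2 * Real.pi * v * x) * Complex.I) •
        (Real.sqrt (2 * Real.pi) • hfun g (-(2 * Real.pi) * v)))
        = fun v : ℝ => Real.sqrt (2 * Real.pi) • F₁ (-(2 * Real.pi) * v) := by
      funext v
      rw [smul_comm, hF₁]
      congr 3
      ring_nf
    rw [h1, integral_smul, MeasureTheory.Measure.integral_comp_mul_left F₁ (-(2 * Real.pi)),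
      smul_smul]
    congr 1
    rw [abs_inv, abs_neg, abs_of_pos (by positivity), sqrt_mul_inv_two_pi]
  rw [hRHS, Pplus]
  congr 1
  rw [← MeasureTheory.integral_indicator measurableSet_Ioi]
  congr 1
  funext s
  rw [hF₁, hfun]
  by_cases hs : s ∈ Set.Ioi (0 : ℝ)
  · simp only [Set.indicator_of_mem hs]
    rw [smul_eq_mul, mul_comm]
    congr 1
    push_cast
    ring_nf
  · simp only [Set.indicator_of_notMem hs, smul_zero, mul_zero]

lemma hasTemperateGrowth_fourierIntegral {h : ℝ → ℂ}
    (hint : ∀ n : ℕ, Integrable (fun t : ℝ => t ^ n • h t)) :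
    Function.HasTemperateGrowth (𝓕 h) := by
  have hnorm : ∀ (n : ℕ), (n : ℕ∞) ≤ (⊤ : ℕ∞) → Integrable (fun v : ℝ => ‖v‖ ^ n * ‖h v‖) :=
    fun n _ => by simpa [norm_smul, norm_pow] using (hint n).norm
  constructor
  · exact Real.contDiff_fourier (N := ⊤) hnorm
  · intro n
    refine ⟨0, ∫ t : ℝ, ‖(-2 * ↑Real.pi * Complex.I * ↑t) ^ n • h t‖, fun x => ?_⟩
    rw [norm_iteratedFDeriv_eq_norm_iteratedDeriv,
      Real.iteratedDeriv_fourier (N := ⊤) (fun k _ => hint k) le_top]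
    simp only [pow_zero, mul_one]
    exact le_trans (VectorFourier.norm_fourierIntegral_le_integral_norm _ _ _ _ _) (le_of_eq rfl)

noncomputable def conjL : ℂ →L[ℝ] ℂ := Complex.conjCLE.toContinuousLinearMap

noncomputable def Bconj : ℂ →L[ℝ] ℂ →L[ℝ] ℂ :=
  ((ContinuousLinearMap.mul ℝ ℂ).flip.comp conjL).flip

/-- `|u|² = u ⬝ conj u` as a Schwartz function. -/
noncomputable def uSq (u : SchwartzMap ℝ ℂ) : SchwartzMap ℝ ℂ :=
  SchwartzMap.bilinLeftCLM Bconj (schwartz_hasTemperateGrowth u) u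

/-- `∂ₓ |u|²` as a Schwartz function. -/
noncomputable def gmap (u : SchwartzMap ℝ ℂ) : SchwartzMap ℝ ℂ :=
  SchwartzMap.derivCLM ℝ ℂ (uSq u)

lemma gmap_eq (u : SchwartzMap ℝ ℂ) :
    deriv (fun y => u y * (starRingEnd ℂ) (u y)) = ⇑(gmap u) := by
  funext x
  rw [gmap, SchwartzMap.derivCLM_apply]
  rfl

set_option maxHeartbeats 1000000 in
/-- The CCM nonlinearity `N = u · P₊(∂_x(|u|²))` preserves the Hardy space: if `û`
vanishes on `(-∞,0)`, then `N` is a Schwartz function whose Fourier transform also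
vanishes on `(-∞,0)`. -/
theorem ccm_nonlinearity_hardy (u : SchwartzMap ℝ ℂ)
    (hu : ∀ ξ : ℝ, ξ < 0 → FT (⇑u) ξ = 0) :
    (∃ N' : SchwartzMap ℝ ℂ, ∀ x : ℝ,
        N' x = u x * Pplus (deriv (fun y => u y * (starRingEnd ℂ) (u y))) x) ∧
    (∀ ξ : ℝ, ξ < 0 →
        FT (fun x => u x * Pplus (deriv (fun y => u y * (starRingEnd ℂ) (u y))) x) ξ = 0) := by
  set g : SchwartzMap ℝ ℂ := gmap u with hg
  -- the rescaled positive-frequency cutoff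
  set h₂ : ℝ → ℂ := fun t : ℝ => Real.sqrt (2 * Real.pi) • hfun (⇑g) (-(2 * Real.pi) * t)
    with hh₂
  have hint₂ : ∀ n : ℕ, Integrable (fun t : ℝ => t ^ n • h₂ t) := fun n =>
    integrable_pow_smul_comp (integrable_pow_smul_hfun g)
      (neg_ne_zero.mpr (by positivity) : (-(2 * Real.pi) : ℝ) ≠ 0) _ n
  have hPeq : Pplus (deriv (fun y => u y * (starRingEnd ℂ) (u y))) = 𝓕 h₂ := by
    rw [gmap_eq u, Pplus_eq_fourierIntegral]
  constructor
  · -- Schwartz part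
    have hTG : Function.HasTemperateGrowth
        (Pplus (deriv (fun y => u y * (starRingEnd ℂ) (u y)))) := by
      rw [hPeq]
      exact hasTemperateGrowth_fourierIntegral hint₂
    refine ⟨SchwartzMap.bilinLeftCLM (ContinuousLinearMap.mul ℝ ℂ) hTG u, fun x => ?_⟩
    rfl
  · -- vanishing of the Fourier transform on negative frequencies
    intro ξ hξ
    rw [FT, hPeq]
    -- the double-integral kernel
    set K : ℝ → ℝ → ℂ := fun x t => u x * (Complex.exp (↑(-2 * Real.pi * t * x) * Complex.I)
      • h₂ t) * Complex.exp (-(Complex.I * x * ξ)) with hK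
    have hinner : ∀ x : ℝ, (u x * 𝓕 h₂ x) * Complex.exp (-(Complex.I * x * ξ))
        = ∫ t : ℝ, K x t := by
      intro x
      rw [hK, Real.fourier_real_eq_integral_exp_smul, integral_mul_const,
        integral_const_mul]
    have h₂meas : StronglyMeasurable h₂ := by
      rw [hh₂]
      exact (((hfun_stronglyMeasurable g).comp_measurable
        (measurable_const_mul _))).fun_const_smul _
    have h₂int : Integrable h₂ := by
      have := hint₂ 0
      simpa using this
    have hKint : Integrable (Function.uncurry K) (volume.prod volume) := by
      have hmeas : AEStronglyMeasurable (Function.uncurry K) (volume.prod volume) := by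
        apply AEStronglyMeasurable.mul
        apply AEStronglyMeasurable.mul
        · exact (u.continuous.comp continuous_fst).aestronglyMeasurable
        · apply AEStronglyMeasurable.fun_smul
          · exact Continuous.aestronglyMeasurable (by continuity)
          · exact (h₂meas.comp_measurable measurable_snd).aestronglyMeasurable
        · exact Continuous.aestronglyMeasurable (by continuity)
      refine Integrable.mono' (u.integrable.norm.mul_prod h₂int.norm) hmeas ?_
      filter_upwards with p
      rcases p with ⟨x, t⟩
      have e1 : ‖Complex.exp (↑(-2 * Real.pi * t * x) * Complex.I)‖ = 1 := by
        simpa using Complex.norm_exp_ofReal_mul_I (-2 * Real.pi * t * x)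
      have e2 : ‖Complex.exp (-(Complex.I * x * ξ))‖ = 1 := by
        rw [Complex.norm_exp]
        simp
      rw [Function.uncurry]
      simp only [hK, norm_mul, norm_smul, e1, e2, one_mul, mul_one, norm_norm]
      exact le_of_eq rfl
    have hswap : (∫ x : ℝ, ∫ t : ℝ, K x t) = ∫ t : ℝ, ∫ x : ℝ, K x t :=
      integral_integral_swap hKint
    have hzero : ∀ t : ℝ, (∫ x : ℝ, K x t) = 0 := by
      intro t
      have hre : (fun x : ℝ => K x t) = fun x : ℝ =>
          h₂ t * (u x * Complex.exp (-(Complex.I * x * ((ξ + 2 * Real.pi * t : ℝ) : ℂ)))) := by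
        funext x
        simp only [hK, smul_eq_mul]
        rw [show (u x : ℂ) * (Complex.exp (↑(-2 * Real.pi * t * x) * Complex.I) * h₂ t)
            * Complex.exp (-(Complex.I * x * ξ))
            = h₂ t * (u x * (Complex.exp (↑(-2 * Real.pi * t * x) * Complex.I)
              * Complex.exp (-(Complex.I * x * ξ)))) from by ring,
          ← Complex.exp_add]
        congr 3
        push_cast
        ring_nf
      rw [hre, integral_const_mul]
      by_cases ht : h₂ t = 0
      · rw [ht, zero_mul]
      · have hmem : -(2 * Real.pi) * t ∈ Set.Ioi (0 : ℝ) := by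
          by_contra hmem
          apply ht
          have h0 : hfun (⇑g) (-(2 * Real.pi) * t) = 0 := by
            rw [hfun, Set.indicator_of_notMem hmem]
          show Real.sqrt (2 * Real.pi) • hfun (⇑g) (-(2 * Real.pi) * t) = 0
          rw [h0, smul_zero]
        have htneg : t < 0 := by
          have := Set.mem_Ioi.mp hmem
          nlinarith [Real.pi_pos]
        have hηneg : ξ + 2 * Real.pi * t < 0 := by nlinarith [Real.pi_pos]
        have := hu (ξ + 2 * Real.pi * t) hηneg
        rw [FT, smul_eq_zero] at this
        rcases this with h | h
        · exact absurd h (inv_ne_zero sqrt_two_pi_ne)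
        · rw [h, mul_zero]
    have : (fun x : ℝ => (u x * 𝓕 h₂ x) * Complex.exp (-(Complex.I * x * ξ)))
        = fun x : ℝ => ∫ t : ℝ, K x t := funext hinner
    rw [show (∫ x : ℝ, u x * 𝓕 h₂ x * Complex.exp (-(Complex.I * ↑x * ↑ξ))) =
        ∫ x : ℝ, ∫ t : ℝ, K x t from congrArg _ this, hswap]
    simp only [hzero, integral_zero, smul_zero]
end

section
/- Key cubic identity in the Lax pair verification (deep-water case): let w : ℝ → ℝ be a real-valued Schwartz function and let g : ℝ → ℂ be a Schwartz function. Then pointwise on ℝ, P₊( w · P₊g ) = (P₊w)·(P₊g) + P₊( conj(P₊w) · g ). -/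
open MeasureTheory Complex

open scoped FourierTransform
open Set Real

namespace CubicAux

/-- Real Schwartz map viewed as complex-valued. -/
noncomputable def ofRealS (w : SchwartzMap ℝ ℝ) : SchwartzMap ℝ ℂ where
  toFun y := (w y : ℂ)
  smooth' := Complex.ofRealCLM.contDiff.comp (w.smooth ⊤)
  decay' := by
    intro k n
    obtain ⟨C, hC⟩ := w.decay' k n
    refine ⟨C, fun x => ?_⟩
    have h : ‖iteratedFDeriv ℝ n (fun y => ((w y : ℝ) : ℂ)) x‖
        = ‖iteratedFDeriv ℝ n w x‖ :=
      (RCLike.ofRealLI (K := ℂ)).norm_iteratedFDeriv_comp_left (w.smooth ⊤).contDiffAt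
        (by exact_mod_cast le_top)
    rw [h]; exact hC x

@[simp] lemma ofRealS_apply (w : SchwartzMap ℝ ℝ) (x : ℝ) :
    ofRealS w x = ((w x : ℝ) : ℂ) := rfl

lemma FT_eq (f : ℝ → ℂ) (ξ : ℝ) :
    FT f ξ = (Real.sqrt (2 * Real.pi))⁻¹ • 𝓕 f ((2 * Real.pi)⁻¹ * ξ) := by
  rw [FT, Real.fourier_real_eq_integral_exp_smul]
  congr 1
  refine integral_congr_ae (Filter.Eventually.of_forall fun v => ?_)
  have hπ : (2 : ℝ) * Real.pi ≠ 0 := by positivity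
  show f v * _ = _ • f v
  rw [smul_eq_mul, mul_comm]
  congr 1
  have : (-2 : ℝ) * Real.pi * v * ((2 * Real.pi)⁻¹ * ξ) = -(v * ξ) := by
    field_simp
  rw [this]
  push_cast
  ring_nf

lemma FT_continuous (f : SchwartzMap ℝ ℂ) : Continuous (FT ⇑f) := by
  have h : Continuous (𝓕 ⇑f) := (SchwartzMap.fourierTransformCLM ℂ f).continuous
  have : Continuous fun ξ : ℝ => (Real.sqrt (2 * Real.pi))⁻¹ • 𝓕 ⇑f ((2 * Real.pi)⁻¹ * ξ) :=
    by fun_prop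
  exact this.congr fun ξ => (FT_eq ⇑f ξ).symm

lemma FT_integrable (f : SchwartzMap ℝ ℂ) : Integrable (FT ⇑f) := by
  have h : Integrable (𝓕 ⇑f) := (SchwartzMap.fourierTransformCLM ℂ f).integrable
  have hπ : ((2 : ℝ) * Real.pi)⁻¹ ≠ 0 := by positivity
  have h2 : Integrable fun ξ : ℝ => 𝓕 ⇑f ((2 * Real.pi)⁻¹ * ξ) := h.comp_mul_left' hπ
  exact (h2.smul ((Real.sqrt (2 * Real.pi))⁻¹ : ℝ)).congr
    (Filter.Eventually.of_forall fun ξ => (FT_eq ⇑f ξ).symm)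

noncomputable def cc : ℂ := ((Real.sqrt (2 * Real.pi))⁻¹ : ℝ)

lemma FT_def (f : ℝ → ℂ) (ξ : ℝ) :
    FT f ξ = cc * ∫ x : ℝ, f x * Complex.exp (-(Complex.I * x * ξ)) := by
  rw [FT, cc, Complex.real_smul]

lemma Pplus_def (g : ℝ → ℂ) (x : ℝ) :
    Pplus g x = cc * ∫ ξ in Ioi (0:ℝ), FT g ξ * Complex.exp (Complex.I * x * ξ) := by
  rw [Pplus, cc, Complex.real_smul]

lemma norm_exp_neg (a b : ℝ) : ‖Complex.exp (-(Complex.I * a * b))‖ = 1 := by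
  rw [Complex.norm_exp]; simp

lemma norm_exp_pos (a b : ℝ) : ‖Complex.exp (Complex.I * a * b)‖ = 1 := by
  rw [Complex.norm_exp]; simp

lemma conj_cc : (starRingEnd ℂ) cc = cc := Complex.conj_ofReal _

lemma FT_conj (w : SchwartzMap ℝ ℝ) (a : ℝ) :
    (starRingEnd ℂ) (FT (⇑(ofRealS w)) a) = FT (⇑(ofRealS w)) (-a) := by
  rw [FT_def, FT_def, map_mul, conj_cc, ← integral_conj]
  congr 1
  refine integral_congr_ae (Filter.Eventually.of_forall fun y => ?_)
  beta_reduce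
  rw [map_mul, ← Complex.exp_conj]
  congr 1
  · exact Complex.conj_ofReal _
  · have : (starRingEnd ℂ) (-(Complex.I * y * a)) = Complex.I * y * a := by
      simp [Complex.conj_ofReal]
    rw [this]
    push_cast
    ring

lemma conj_Pplus (w : SchwartzMap ℝ ℝ) (y : ℝ) :
    (starRingEnd ℂ) (Pplus (⇑(ofRealS w)) y)
      = cc * ∫ a in Ioi (0:ℝ), FT (⇑(ofRealS w)) (-a) * Complex.exp (-(Complex.I * y * a)) := by
  rw [Pplus_def, map_mul, conj_cc, ← integral_conj]
  congr 1
  refine integral_congr_ae (Filter.Eventually.of_forall fun a => ?_)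
  beta_reduce
  rw [map_mul, ← FT_conj, ← Complex.exp_conj]
  congr 1
  simp [Complex.conj_ofReal]

lemma setIntegral_shift (F : ℝ → ℂ) (ξ : ℝ) :
    (∫ a in Ioi (0:ℝ), F (a + ξ)) = ∫ η in Ioi ξ, F η := by
  have key : ∀ a : ℝ, (Ioi (0:ℝ)).indicator (fun a => F (a + ξ)) a
      = (Ioi ξ).indicator F (a + ξ) := by
    intro a
    by_cases ha : (0:ℝ) < a
    · rw [Set.indicator_of_mem (mem_Ioi.2 ha), Set.indicator_of_mem (mem_Ioi.2 (by linarith))]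
    · rw [Set.indicator_of_notMem (by simpa using ha),
        Set.indicator_of_notMem (by simp only [mem_Ioi, not_lt] at ha ⊢; linarith)]
  calc ∫ a in Ioi (0:ℝ), F (a + ξ)
      = ∫ a : ℝ, (Ioi (0:ℝ)).indicator (fun a => F (a + ξ)) a :=
        (integral_indicator measurableSet_Ioi).symm
    _ = ∫ a : ℝ, (Ioi ξ).indicator F (a + ξ) :=
        integral_congr_ae (Filter.Eventually.of_forall key)
    _ = ∫ η : ℝ, (Ioi ξ).indicator F η := integral_add_right_eq_self _ ξ
    _ = ∫ η in Ioi ξ, F η := integral_indicator measurableSet_Ioi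

noncomputable def Gfun (W g : SchwartzMap ℝ ℂ) (x : ℝ) : ℝ × ℝ → ℂ :=
  fun p => FT ⇑W (p.1 - p.2) * FT ⇑g p.2 * Complex.exp (Complex.I * x * p.1)

lemma Gfun_continuous (W g : SchwartzMap ℝ ℂ) (x : ℝ) : Continuous (Gfun W g x) := by
  refine Continuous.mul (Continuous.mul ?_ ?_) ?_
  · exact (FT_continuous W).comp (continuous_fst.sub continuous_snd)
  · exact (FT_continuous g).comp continuous_snd
  · exact Complex.continuous_exp.comp
      ((continuous_const.mul (Complex.continuous_ofReal.comp continuous_fst)))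

lemma Gfun_integrable (W g : SchwartzMap ℝ ℂ) (x : ℝ) :
    Integrable (Gfun W g x) ((volume : Measure ℝ).prod volume) := by
  have hbase : Integrable (fun p : ℝ × ℝ => FT ⇑g p.2 * FT ⇑W (p.1 - p.2))
      ((volume : Measure ℝ).prod volume) :=
    (FT_integrable g).convolution_integrand (ContinuousLinearMap.mul ℝ ℂ) (FT_integrable W)
  refine hbase.norm.mono' ((Gfun_continuous W g x).aestronglyMeasurable)
    (Filter.Eventually.of_forall fun p => ?_)
  exact le_of_eq (by rw [Gfun, norm_mul, norm_exp_pos, mul_one, norm_mul, mul_comm, ← norm_mul])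

lemma iter_eq_ind {A : Set ℝ} {B : ℝ → Set ℝ} (hA : MeasurableSet A)
    (hB : ∀ ξ, MeasurableSet (B ξ)) (F : ℝ × ℝ → ℂ)
    (hF : Integrable (fun p => ({p : ℝ × ℝ | p.1 ∈ A ∧ p.2 ∈ B p.1}).indicator F p)
      ((volume : Measure ℝ).prod volume)) :
    (∫ ξ in A, ∫ η in B ξ, F (ξ, η)) =
      ∫ p, ({p : ℝ × ℝ | p.1 ∈ A ∧ p.2 ∈ B p.1}).indicator F p
        ∂((volume : Measure ℝ).prod volume) := by
  rw [MeasureTheory.integral_prod _ hF]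
  have key : ∀ ξ : ℝ, (∫ η, ({p : ℝ × ℝ | p.1 ∈ A ∧ p.2 ∈ B p.1}).indicator F (ξ, η))
      = A.indicator (fun ξ => ∫ η in B ξ, F (ξ, η)) ξ := by
    intro ξ
    by_cases hξ : ξ ∈ A
    · rw [Set.indicator_of_mem hξ, ← integral_indicator (hB ξ)]
      refine integral_congr_ae (Filter.Eventually.of_forall fun η => ?_)
      beta_reduce
      by_cases hη : η ∈ B ξ
      · rw [Set.indicator_of_mem (show (ξ, η) ∈ {p : ℝ × ℝ | p.1 ∈ A ∧ p.2 ∈ B p.1} from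
          ⟨hξ, hη⟩), Set.indicator_of_mem hη]
      · rw [Set.indicator_of_notMem (by simp [hη]), Set.indicator_of_notMem hη]
    · have h0 : ∀ η : ℝ, ({p : ℝ × ℝ | p.1 ∈ A ∧ p.2 ∈ B p.1}).indicator F (ξ, η) = 0 :=
        fun η => Set.indicator_of_notMem (by simp [hξ]) F
      simp only [h0, integral_zero, Set.indicator_of_notMem hξ]
  rw [← integral_indicator hA]
  exact (integral_congr_ae (Filter.Eventually.of_forall key)).symm

lemma iter_eq_ind' {A : Set ℝ} {B : ℝ → Set ℝ} (hA : MeasurableSet A)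
    (hB : ∀ η, MeasurableSet (B η)) (F : ℝ × ℝ → ℂ)
    (hF : Integrable (fun p => ({p : ℝ × ℝ | p.2 ∈ A ∧ p.1 ∈ B p.2}).indicator F p)
      ((volume : Measure ℝ).prod volume)) :
    (∫ η in A, ∫ ξ in B η, F (ξ, η)) =
      ∫ p, ({p : ℝ × ℝ | p.2 ∈ A ∧ p.1 ∈ B p.2}).indicator F p
        ∂((volume : Measure ℝ).prod volume) := by
  rw [MeasureTheory.integral_prod_symm _ hF]
  have key : ∀ η : ℝ, (∫ ξ, ({p : ℝ × ℝ | p.2 ∈ A ∧ p.1 ∈ B p.2}).indicator F (ξ, η))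
      = A.indicator (fun η => ∫ ξ in B η, F (ξ, η)) η := by
    intro η
    by_cases hη : η ∈ A
    · rw [Set.indicator_of_mem hη, ← integral_indicator (hB η)]
      refine integral_congr_ae (Filter.Eventually.of_forall fun ξ => ?_)
      beta_reduce
      by_cases hξ : ξ ∈ B η
      · rw [Set.indicator_of_mem (show (ξ, η) ∈ {p : ℝ × ℝ | p.2 ∈ A ∧ p.1 ∈ B p.2} from
          ⟨hη, hξ⟩), Set.indicator_of_mem hξ]
      · rw [Set.indicator_of_notMem (by simp [hξ]), Set.indicator_of_notMem hξ]
    · have h0 : ∀ ξ : ℝ, ({p : ℝ × ℝ | p.2 ∈ A ∧ p.1 ∈ B p.2}).indicator F (ξ, η) = 0 :=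
        fun ξ => Set.indicator_of_notMem (by simp [hη]) F
      simp only [h0, integral_zero, Set.indicator_of_notMem hη]
  rw [← integral_indicator hA]
  exact (integral_congr_ae (Filter.Eventually.of_forall key)).symm

lemma diag_null : ((volume : Measure ℝ).prod volume) {p : ℝ × ℝ | p.1 = p.2} = 0 := by
  have hm : MeasurableSet {p : ℝ × ℝ | p.1 = p.2} :=
    measurableSet_eq_fun measurable_fst measurable_snd
  rw [MeasureTheory.Measure.prod_apply hm]
  have h : ∀ ξ : ℝ, (volume (Prod.mk ξ ⁻¹' {p : ℝ × ℝ | p.1 = p.2})) = 0 := by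
    intro ξ
    have : (Prod.mk ξ ⁻¹' {p : ℝ × ℝ | p.1 = p.2}) = {ξ} := by
      ext η; simp [eq_comm]
    rw [this]; exact measure_singleton ξ
  simp [h]

lemma FT_mul_Pplus (W g : SchwartzMap ℝ ℂ) (ξ : ℝ) :
    FT (fun y => W y * Pplus ⇑g y) ξ
      = cc * ∫ η in Ioi (0:ℝ), FT ⇑W (ξ - η) * FT ⇑g η := by
  set h : ℝ → ℝ → ℂ := fun y η => W y * FT ⇑g η *
    Complex.exp (-(Complex.I * y * ((ξ:ℂ) - η))) with hh
  have hswap : (∫ y : ℝ, ∫ η in Ioi (0:ℝ), h y η)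
      = ∫ η in Ioi (0:ℝ), ∫ y : ℝ, h y η := by
    apply integral_integral_swap
    have hbase : Integrable (fun q : ℝ × ℝ => W q.1 * FT ⇑g q.2)
        ((volume : Measure ℝ).prod ((volume : Measure ℝ).restrict (Ioi 0))) :=
      W.integrable.mul_prod ((FT_integrable g).restrict)
    refine hbase.norm.mono' ?_ (Filter.Eventually.of_forall fun q => ?_)
    · apply Continuous.aestronglyMeasurable
      refine Continuous.mul (Continuous.mul (W.continuous.comp continuous_fst)
        ((FT_continuous g).comp continuous_snd)) (Complex.continuous_exp.comp ?_)
      exact ((continuous_const.mul (Complex.continuous_ofReal.comp continuous_fst)).mul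
        (continuous_const.sub (Complex.continuous_ofReal.comp continuous_snd))).neg
    · show ‖h q.1 q.2‖ ≤ _
      rw [hh]
      beta_reduce
      rw [norm_mul, show ((ξ:ℂ) - (q.2:ℂ)) = ((ξ - q.2 : ℝ) : ℂ) by push_cast; ring,
        norm_exp_neg, mul_one]
  have hpt1 : ∀ y : ℝ, W y * Pplus ⇑g y * Complex.exp (-(Complex.I * y * ξ))
      = cc * ∫ η in Ioi (0:ℝ), h y η := by
    intro y
    rw [Pplus_def]
    rw [show W y * (cc * ∫ η in Ioi (0:ℝ), FT ⇑g η * Complex.exp (Complex.I * y * η)) *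
        Complex.exp (-(Complex.I * y * ξ))
      = cc * ((∫ η in Ioi (0:ℝ), FT ⇑g η * Complex.exp (Complex.I * y * η)) *
        (W y * Complex.exp (-(Complex.I * y * ξ)))) from by ring]
    rw [← integral_mul_const]
    congr 1
    refine integral_congr_ae (Filter.Eventually.of_forall fun η => ?_)
    beta_reduce
    rw [hh]
    beta_reduce
    rw [show FT ⇑g η * Complex.exp (Complex.I * y * η) *
        (W y * Complex.exp (-(Complex.I * y * ξ)))
      = W y * FT ⇑g η *
        (Complex.exp (Complex.I * y * η) * Complex.exp (-(Complex.I * y * ξ))) from by ring,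
      ← Complex.exp_add]
    congr 2
    ring
  have hpt2 : ∀ η : ℝ, FT ⇑W (ξ - η) * FT ⇑g η = cc * ∫ y : ℝ, h y η := by
    intro η
    rw [FT_def, mul_assoc]
    congr 1
    rw [← integral_mul_const]
    refine integral_congr_ae (Filter.Eventually.of_forall fun y => ?_)
    beta_reduce
    rw [hh]
    beta_reduce
    rw [show ((ξ - η : ℝ) : ℂ) = ((ξ:ℂ) - η) by push_cast; ring]
    ring
  rw [FT_def]
  congr 1
  calc ∫ y : ℝ, (fun y => W y * Pplus ⇑g y) y * Complex.exp (-(Complex.I * y * ξ))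
      = ∫ y : ℝ, cc * ∫ η in Ioi (0:ℝ), h y η :=
        integral_congr_ae (Filter.Eventually.of_forall fun y => hpt1 y)
    _ = cc * ∫ y : ℝ, ∫ η in Ioi (0:ℝ), h y η := integral_const_mul _ _
    _ = cc * ∫ η in Ioi (0:ℝ), ∫ y : ℝ, h y η := by rw [hswap]
    _ = ∫ η in Ioi (0:ℝ), cc * ∫ y : ℝ, h y η := (integral_const_mul _ _).symm
    _ = ∫ η in Ioi (0:ℝ), FT ⇑W (ξ - η) * FT ⇑g η :=
        integral_congr_ae (Filter.Eventually.of_forall fun η => (hpt2 η).symm)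

lemma FT_conjPplus_mul (w : SchwartzMap ℝ ℝ) (g : SchwartzMap ℝ ℂ) (ξ : ℝ) :
    FT (fun y => (starRingEnd ℂ) (Pplus (⇑(ofRealS w)) y) * g y) ξ
      = cc * ∫ η in Ioi ξ, FT ⇑(ofRealS w) (ξ - η) * FT ⇑g η := by
  set W := ofRealS w with hW
  set h : ℝ → ℝ → ℂ := fun y a => g y * FT ⇑W (-a) *
    Complex.exp (-(Complex.I * y * ((ξ:ℂ) + a))) with hh
  have hWneg : Integrable (fun a : ℝ => FT ⇑W (-a)) := by
    have h1 := (FT_integrable W).comp_mul_left' (R := (-1:ℝ)) (by norm_num)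
    simpa [neg_one_mul] using h1
  have hWnegC : Continuous (fun a : ℝ => FT ⇑W (-a)) :=
    (FT_continuous W).comp continuous_neg
  have hswap : (∫ y : ℝ, ∫ a in Ioi (0:ℝ), h y a)
      = ∫ a in Ioi (0:ℝ), ∫ y : ℝ, h y a := by
    apply integral_integral_swap
    have hbase : Integrable (fun q : ℝ × ℝ => g q.1 * FT ⇑W (-q.2))
        ((volume : Measure ℝ).prod ((volume : Measure ℝ).restrict (Ioi 0))) :=
      g.integrable.mul_prod (hWneg.restrict)
    refine hbase.norm.mono' ?_ (Filter.Eventually.of_forall fun q => ?_)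
    · apply Continuous.aestronglyMeasurable
      refine Continuous.mul (Continuous.mul (g.continuous.comp continuous_fst)
        (hWnegC.comp continuous_snd)) (Complex.continuous_exp.comp ?_)
      exact ((continuous_const.mul (Complex.continuous_ofReal.comp continuous_fst)).mul
        (continuous_const.add (Complex.continuous_ofReal.comp continuous_snd))).neg
    · show ‖h q.1 q.2‖ ≤ _
      rw [hh]
      beta_reduce
      rw [norm_mul, show ((ξ:ℂ) + (q.2:ℂ)) = ((ξ + q.2 : ℝ) : ℂ) by push_cast; ring,
        norm_exp_neg, mul_one]
  have hpt1 : ∀ y : ℝ, (starRingEnd ℂ) (Pplus (⇑W) y) * g y *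
        Complex.exp (-(Complex.I * y * ξ))
      = cc * ∫ a in Ioi (0:ℝ), h y a := by
    intro y
    rw [hW, conj_Pplus, ← hW]
    rw [show cc * (∫ a in Ioi (0:ℝ), FT ⇑W (-a) * Complex.exp (-(Complex.I * y * a))) * g y *
        Complex.exp (-(Complex.I * y * ξ))
      = cc * ((∫ a in Ioi (0:ℝ), FT ⇑W (-a) * Complex.exp (-(Complex.I * y * a))) *
        (g y * Complex.exp (-(Complex.I * y * ξ)))) from by ring]
    rw [← integral_mul_const]
    congr 1
    refine integral_congr_ae (Filter.Eventually.of_forall fun a => ?_)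
    beta_reduce
    rw [hh]
    beta_reduce
    rw [show FT ⇑W (-a) * Complex.exp (-(Complex.I * y * a)) *
        (g y * Complex.exp (-(Complex.I * y * ξ)))
      = g y * FT ⇑W (-a) *
        (Complex.exp (-(Complex.I * y * a)) * Complex.exp (-(Complex.I * y * ξ))) from by ring,
      ← Complex.exp_add]
    congr 2
    ring
  have hpt2 : ∀ a : ℝ, FT ⇑W (-a) * FT ⇑g (a + ξ) = cc * ∫ y : ℝ, h y a := by
    intro a
    rw [FT_def (⇑g)]
    rw [show FT ⇑W (-a) *
        (cc * ∫ y : ℝ, g y * Complex.exp (-(Complex.I * y * (((a + ξ : ℝ)) : ℂ))))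
      = cc * ((∫ y : ℝ, g y * Complex.exp (-(Complex.I * y * (((a + ξ : ℝ)) : ℂ)))) *
        FT ⇑W (-a)) from by ring]
    congr 1
    rw [← integral_mul_const]
    refine integral_congr_ae (Filter.Eventually.of_forall fun y => ?_)
    beta_reduce
    rw [hh]
    beta_reduce
    rw [show (((a + ξ : ℝ)) : ℂ) = ((ξ:ℂ) + a) by push_cast; ring]
    ring
  rw [FT_def]
  congr 1
  calc ∫ y : ℝ, (fun y => (starRingEnd ℂ) (Pplus (⇑W) y) * g y) y *
        Complex.exp (-(Complex.I * y * ξ))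
      = ∫ y : ℝ, cc * ∫ a in Ioi (0:ℝ), h y a :=
        integral_congr_ae (Filter.Eventually.of_forall fun y => hpt1 y)
    _ = cc * ∫ y : ℝ, ∫ a in Ioi (0:ℝ), h y a := integral_const_mul _ _
    _ = cc * ∫ a in Ioi (0:ℝ), ∫ y : ℝ, h y a := by rw [hswap]
    _ = ∫ a in Ioi (0:ℝ), cc * ∫ y : ℝ, h y a := (integral_const_mul _ _).symm
    _ = ∫ a in Ioi (0:ℝ), FT ⇑W (-a) * FT ⇑g (a + ξ) := by
        refine integral_congr_ae (Filter.Eventually.of_forall fun a => ?_)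
        beta_reduce
        exact (hpt2 a).symm
    _ = ∫ η in Ioi ξ, FT ⇑W (ξ - η) * FT ⇑g η := by
        rw [← setIntegral_shift (fun η => FT ⇑W (ξ - η) * FT ⇑g η) ξ]
        refine integral_congr_ae (Filter.Eventually.of_forall fun a => ?_)
        beta_reduce
        rw [show ξ - (a + ξ) = -a from by ring]

lemma Pplus_mul_Pplus (W g : SchwartzMap ℝ ℂ) (x : ℝ) :
    Pplus ⇑W x * Pplus ⇑g x
      = cc * ∫ η in Ioi (0:ℝ), cc * ∫ ξ' in Ioi η, Gfun W g x (ξ', η) := by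
  have key : ∀ η : ℝ, cc * ∫ ξ' in Ioi η, Gfun W g x (ξ', η)
      = Pplus ⇑W x * (FT ⇑g η * Complex.exp (Complex.I * x * η)) := by
    intro η
    calc cc * ∫ ξ' in Ioi η, Gfun W g x (ξ', η)
        = cc * ∫ a in Ioi (0:ℝ), Gfun W g x (a + η, η) := by
          rw [setIntegral_shift (fun ξ' => Gfun W g x (ξ', η)) η]
      _ = cc * ∫ a in Ioi (0:ℝ), (FT ⇑W a * Complex.exp (Complex.I * x * a)) *
            (FT ⇑g η * Complex.exp (Complex.I * x * η)) := by
          congr 1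
          refine integral_congr_ae (Filter.Eventually.of_forall fun a => ?_)
          simp only [Gfun]
          rw [show a + η - η = a from by ring,
            show Complex.I * x * ((a + η : ℝ) : ℂ)
              = Complex.I * x * a + Complex.I * x * η from by push_cast; ring,
            Complex.exp_add]
          ring
      _ = cc * ((∫ a in Ioi (0:ℝ), FT ⇑W a * Complex.exp (Complex.I * x * a)) *
            (FT ⇑g η * Complex.exp (Complex.I * x * η))) := by rw [integral_mul_const]
      _ = Pplus ⇑W x * (FT ⇑g η * Complex.exp (Complex.I * x * η)) := by
          rw [Pplus_def]; ring
  calc Pplus ⇑W x * Pplus ⇑g x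
      = Pplus ⇑W x * (cc * ∫ η in Ioi (0:ℝ), FT ⇑g η * Complex.exp (Complex.I * x * η)) := by
        rw [Pplus_def ⇑g]
    _ = cc * ∫ η in Ioi (0:ℝ), Pplus ⇑W x * (FT ⇑g η * Complex.exp (Complex.I * x * η)) := by
        rw [integral_const_mul]; ring
    _ = cc * ∫ η in Ioi (0:ℝ), cc * ∫ ξ' in Ioi η, Gfun W g x (ξ', η) := by
        congr 1
        exact integral_congr_ae (Filter.Eventually.of_forall fun η => (key η).symm)

lemma hS1 : MeasurableSet {p : ℝ × ℝ | p.1 ∈ Ioi (0:ℝ) ∧ p.2 ∈ Ioi (0:ℝ)} :=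
  (measurableSet_lt measurable_const measurable_fst).inter
    (measurableSet_lt measurable_const measurable_snd)

lemma hS2 : MeasurableSet {p : ℝ × ℝ | p.2 ∈ Ioi (0:ℝ) ∧ p.1 ∈ Ioi p.2} :=
  (measurableSet_lt measurable_const measurable_snd).inter
    (measurableSet_lt measurable_snd measurable_fst)

lemma hS3 : MeasurableSet {p : ℝ × ℝ | p.1 ∈ Ioi (0:ℝ) ∧ p.2 ∈ Ioi p.1} :=
  (measurableSet_lt measurable_const measurable_fst).inter
    (measurableSet_lt measurable_fst measurable_snd)

lemma ind_split (F : ℝ × ℝ → ℂ) :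
    (fun p => ({p : ℝ × ℝ | p.1 ∈ Ioi (0:ℝ) ∧ p.2 ∈ Ioi (0:ℝ)}).indicator F p)
      =ᵐ[(volume : Measure ℝ).prod volume]
    (fun p => ({p : ℝ × ℝ | p.2 ∈ Ioi (0:ℝ) ∧ p.1 ∈ Ioi p.2}).indicator F p
      + ({p : ℝ × ℝ | p.1 ∈ Ioi (0:ℝ) ∧ p.2 ∈ Ioi p.1}).indicator F p) := by
  have hne : ∀ᵐ p ∂((volume : Measure ℝ).prod volume), p.1 ≠ p.2 := by
    rw [ae_iff]
    convert diag_null using 2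
    ext p
    simp
  filter_upwards [hne] with p hp
  simp only [Set.indicator_apply, Set.mem_setOf_eq, Set.mem_Ioi]
  rcases lt_trichotomy p.1 p.2 with h | h | h
  · by_cases h1 : (0:ℝ) < p.1
    · rw [if_pos ⟨h1, by linarith⟩, if_neg (by rintro ⟨_, hh⟩; linarith),
        if_pos ⟨h1, h⟩, zero_add]
    · rw [if_neg (by rintro ⟨hh, _⟩; exact h1 hh),
        if_neg (by rintro ⟨hh2, hh⟩; exact h1 (lt_trans hh2 hh)),
        if_neg (by rintro ⟨hh, _⟩; exact h1 hh), zero_add]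
  · exact absurd h hp
  · by_cases h2 : (0:ℝ) < p.2
    · rw [if_pos ⟨by linarith, h2⟩, if_pos ⟨h2, h⟩,
        if_neg (by rintro ⟨_, hh⟩; linarith), add_zero]
    · rw [if_neg (by rintro ⟨_, hh⟩; exact h2 hh),
        if_neg (by rintro ⟨hh, _⟩; exact h2 hh),
        if_neg (by rintro ⟨hh, hh2⟩; exact h2 (lt_trans hh hh2)), add_zero]

lemma term1 (W g : SchwartzMap ℝ ℂ) (x : ℝ) :
    Pplus (fun y => W y * Pplus ⇑g y) x
      = cc * (cc * ∫ p, ({p : ℝ × ℝ | p.1 ∈ Ioi (0:ℝ) ∧ p.2 ∈ Ioi (0:ℝ)}).indicator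
          (Gfun W g x) p ∂((volume : Measure ℝ).prod volume)) := by
  rw [Pplus_def]
  congr 1
  calc ∫ ξ in Ioi (0:ℝ), FT (fun y => W y * Pplus ⇑g y) ξ * Complex.exp (Complex.I * x * ξ)
      = ∫ ξ in Ioi (0:ℝ), cc * ∫ η in Ioi (0:ℝ), Gfun W g x (ξ, η) := by
        refine integral_congr_ae (Filter.Eventually.of_forall fun ξ => ?_)
        beta_reduce
        rw [FT_mul_Pplus, mul_assoc]
        congr 1
        rw [← integral_mul_const]
        refine integral_congr_ae (Filter.Eventually.of_forall fun η => ?_)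
        beta_reduce
        simp only [Gfun]
    _ = cc * ∫ ξ in Ioi (0:ℝ), ∫ η in Ioi (0:ℝ), Gfun W g x (ξ, η) := integral_const_mul _ _
    _ = cc * ∫ p, ({p : ℝ × ℝ | p.1 ∈ Ioi (0:ℝ) ∧ p.2 ∈ Ioi (0:ℝ)}).indicator
          (Gfun W g x) p ∂((volume : Measure ℝ).prod volume) := by
        rw [iter_eq_ind (A := Ioi (0:ℝ)) (B := fun _ => Ioi (0:ℝ)) measurableSet_Ioi
          (fun _ => measurableSet_Ioi) (Gfun W g x)
          ((Gfun_integrable W g x).indicator hS1)]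

lemma term2 (W g : SchwartzMap ℝ ℂ) (x : ℝ) :
    Pplus ⇑W x * Pplus ⇑g x
      = cc * (cc * ∫ p, ({p : ℝ × ℝ | p.2 ∈ Ioi (0:ℝ) ∧ p.1 ∈ Ioi p.2}).indicator
          (Gfun W g x) p ∂((volume : Measure ℝ).prod volume)) := by
  rw [Pplus_mul_Pplus W g x]
  congr 1
  calc ∫ η in Ioi (0:ℝ), cc * ∫ ξ' in Ioi η, Gfun W g x (ξ', η)
      = cc * ∫ η in Ioi (0:ℝ), ∫ ξ' in Ioi η, Gfun W g x (ξ', η) := integral_const_mul _ _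
    _ = cc * ∫ p, ({p : ℝ × ℝ | p.2 ∈ Ioi (0:ℝ) ∧ p.1 ∈ Ioi p.2}).indicator
          (Gfun W g x) p ∂((volume : Measure ℝ).prod volume) := by
        rw [iter_eq_ind' (A := Ioi (0:ℝ)) (B := fun η => Ioi η) measurableSet_Ioi
          (fun _ => measurableSet_Ioi) (Gfun W g x)
          ((Gfun_integrable W g x).indicator hS2)]

lemma term3 (w : SchwartzMap ℝ ℝ) (g : SchwartzMap ℝ ℂ) (x : ℝ) :
    Pplus (fun y => (starRingEnd ℂ) (Pplus (⇑(ofRealS w)) y) * g y) x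
      = cc * (cc * ∫ p, ({p : ℝ × ℝ | p.1 ∈ Ioi (0:ℝ) ∧ p.2 ∈ Ioi p.1}).indicator
          (Gfun (ofRealS w) g x) p ∂((volume : Measure ℝ).prod volume)) := by
  rw [Pplus_def]
  congr 1
  calc ∫ ξ in Ioi (0:ℝ), FT (fun y => (starRingEnd ℂ) (Pplus (⇑(ofRealS w)) y) * g y) ξ *
        Complex.exp (Complex.I * x * ξ)
      = ∫ ξ in Ioi (0:ℝ), cc * ∫ η in Ioi ξ, Gfun (ofRealS w) g x (ξ, η) := by
        refine integral_congr_ae (Filter.Eventually.of_forall fun ξ => ?_)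
        beta_reduce
        rw [FT_conjPplus_mul, mul_assoc]
        congr 1
        rw [← integral_mul_const]
        refine integral_congr_ae (Filter.Eventually.of_forall fun η => ?_)
        beta_reduce
        simp only [Gfun]
    _ = cc * ∫ ξ in Ioi (0:ℝ), ∫ η in Ioi ξ, Gfun (ofRealS w) g x (ξ, η) :=
        integral_const_mul _ _
    _ = cc * ∫ p, ({p : ℝ × ℝ | p.1 ∈ Ioi (0:ℝ) ∧ p.2 ∈ Ioi p.1}).indicator
          (Gfun (ofRealS w) g x) p ∂((volume : Measure ℝ).prod volume) := by
        rw [iter_eq_ind (A := Ioi (0:ℝ)) (B := fun ξ => Ioi ξ) measurableSet_Ioi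
          (fun _ => measurableSet_Ioi) (Gfun (ofRealS w) g x)
          ((Gfun_integrable (ofRealS w) g x).indicator hS3)]

end CubicAux

/-- Key cubic identity in the Lax pair verification (deep-water case): for a
real-valued Schwartz `w` and Schwartz `g`,
`P₊(w · P₊g) = (P₊w)·(P₊g) + P₊(conj(P₊w) · g)` pointwise. -/
theorem cubic_pplus_identity (w : SchwartzMap ℝ ℝ) (g : SchwartzMap ℝ ℂ) :
    ∀ x : ℝ,
      Pplus (fun y => ((w y : ℝ) : ℂ) * Pplus (⇑g) y) x =
        Pplus (fun y => ((w y : ℝ) : ℂ)) x * Pplus (⇑g) x +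
          Pplus (fun y => (starRingEnd ℂ) (Pplus (fun z => ((w z : ℝ) : ℂ)) y) * g y) x := by
  intro x
  have e1 : (fun y => ((w y : ℝ) : ℂ) * Pplus (⇑g) y)
      = (fun y => (CubicAux.ofRealS w) y * Pplus (⇑g) y) := rfl
  have e2 : (fun y => ((w y : ℝ) : ℂ)) = ⇑(CubicAux.ofRealS w) := rfl
  have e3 : (fun z => ((w z : ℝ) : ℂ)) = ⇑(CubicAux.ofRealS w) := rfl
  rw [e1, e2, CubicAux.term1 (CubicAux.ofRealS w) g x,
    CubicAux.term2 (CubicAux.ofRealS w) g x, CubicAux.term3 w g x]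
  have hsplit : (∫ p, ({p : ℝ × ℝ | p.1 ∈ Set.Ioi (0:ℝ) ∧ p.2 ∈ Set.Ioi (0:ℝ)}).indicator
        (CubicAux.Gfun (CubicAux.ofRealS w) g x) p ∂((volume : Measure ℝ).prod volume))
      = (∫ p, ({p : ℝ × ℝ | p.2 ∈ Set.Ioi (0:ℝ) ∧ p.1 ∈ Set.Ioi p.2}).indicator
        (CubicAux.Gfun (CubicAux.ofRealS w) g x) p ∂((volume : Measure ℝ).prod volume))
      + (∫ p, ({p : ℝ × ℝ | p.1 ∈ Set.Ioi (0:ℝ) ∧ p.2 ∈ Set.Ioi p.1}).indicator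
        (CubicAux.Gfun (CubicAux.ofRealS w) g x) p ∂((volume : Measure ℝ).prod volume)) := by
    rw [integral_congr_ae (CubicAux.ind_split (CubicAux.Gfun (CubicAux.ofRealS w) g x))]
    exact integral_add
      ((CubicAux.Gfun_integrable (CubicAux.ofRealS w) g x).indicator CubicAux.hS2)
      ((CubicAux.Gfun_integrable (CubicAux.ofRealS w) g x).indicator CubicAux.hS3)
  rw [hsplit]
  ring
end

section
/- Quantitative resolvent embedding: for every Schwartz function f : ℝ → ℂ, every κ > 0, and every x ∈ ℝ, | (2π)^{-1/2} ∫_ℝ ( f̂(ξ) / (|ξ| + κ) ) e^{ixξ} dξ | ≤ (πκ)^{-1/2} · ‖f‖_{L²(ℝ)}. That is, the operator (|∂_x| + κ)^{-1} maps L² into L^∞ with operator norm at most (πκ)^{-1/2}. -/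
open MeasureTheory Complex Real
open scoped FourierTransform

lemma FT_eq_fourierIntegral (f : ℝ → ℂ) (ξ : ℝ) :
    FT f ξ = (Real.sqrt (2 * Real.pi))⁻¹ • (𝓕 f) ((2 * Real.pi)⁻¹ * ξ) := by
  rw [FT, Real.fourier_real_eq_integral_exp_smul]
  congr 1
  refine integral_congr_ae (Filter.Eventually.of_forall fun v => ?_)
  simp only [smul_eq_mul]
  rw [mul_comm]
  congr 1
  have h : -2 * Real.pi * v * ((2 * Real.pi)⁻¹ * ξ) = -(v * ξ) := by
    field_simp
  rw [h]
  push_cast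
  ring_nf

lemma mul_conj_self (z : ℂ) : z * (starRingEnd ℂ) z = ((‖z‖ ^ 2 : ℝ) : ℂ) := by
  rw [Complex.mul_conj]
  norm_cast
  rw [Complex.normSq_eq_norm_sq]

lemma integral_coe_real (r : ℝ → ℝ) : ∫ x : ℝ, ((r x : ℝ) : ℂ) = ((∫ x : ℝ, r x : ℝ) : ℂ) := by
  simpa using integral_ofReal (𝕜 := ℂ) (f := r)

lemma plancherel_schwartz (f : SchwartzMap ℝ ℂ) :
    ∫ ξ : ℝ, ‖𝓕 (⇑f) ξ‖ ^ 2 = ∫ y : ℝ, ‖f y‖ ^ 2 := by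
  set g : SchwartzMap ℝ ℂ := SchwartzMap.fourierTransformCLM ℂ f with hg
  have hgf : ⇑g = 𝓕 ⇑f := rfl
  set G : ℝ → ℂ := fun w => (starRingEnd ℂ) (g w) with hGdef
  have hgint : Integrable (⇑g) volume := g.integrable
  have hGint : Integrable G := by
    have := (Complex.conjCLE : ℂ →L[ℝ] ℂ).integrable_comp hgint
    exact this
  have hflip : (innerₗ ℝ).flip = innerₗ ℝ := by
    apply LinearMap.ext; intro a; apply LinearMap.ext; intro b
    exact real_inner_comm a b
  have key : ∫ ξ, (𝓕 (⇑f) ξ) • G ξ = ∫ y, f y • (𝓕 G y) := by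
    have h := VectorFourier.integral_fourierIntegral_smul_eq_flip (L := innerₗ ℝ) (μ := volume) (ν := volume)
      Real.continuous_fourierChar continuous_inner (f.integrable (μ := volume)) hGint
    rw [hflip] at h
    exact h
  -- identify 𝓕 G with conj ∘ f
  have hinv : 𝓕⁻ (⇑g) = ⇑f := by
    rw [hgf]
    exact Continuous.fourierInv_fourier_eq f.continuous (f.integrable (μ := volume)) (hgf ▸ hgint)
  have hFG : ∀ y : ℝ, 𝓕 G y = (starRingEnd ℂ) (f y) := by
    intro y
    have : 𝓕 G y = (starRingEnd ℂ) (𝓕⁻ (⇑g) y) := by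
      rw [Real.fourier_eq', Real.fourierInv_eq', ← integral_conj]
      refine integral_congr_ae (Filter.Eventually.of_forall fun v => ?_)
      simp only [smul_eq_mul, map_mul, ← Complex.exp_conj, map_mul, Complex.conj_I,
        Complex.conj_ofReal, hGdef]
      push_cast
      ring_nf
    rw [this, hinv]
  have lhs : ∫ ξ, (𝓕 (⇑f) ξ) • G ξ = ((∫ ξ : ℝ, ‖𝓕 (⇑f) ξ‖ ^ 2 : ℝ) : ℂ) := by
    rw [← integral_coe_real]
    refine integral_congr_ae (Filter.Eventually.of_forall fun ξ => ?_)
    simp only [smul_eq_mul, hGdef]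
    simp only [← hgf]
    exact mul_conj_self (g ξ)
  have rhs : ∫ y, f y • (𝓕 G y) = ((∫ y : ℝ, ‖f y‖ ^ 2 : ℝ) : ℂ) := by
    rw [← integral_coe_real]
    refine integral_congr_ae (Filter.Eventually.of_forall fun y => ?_)
    simp only [smul_eq_mul]
    rw [hFG y]
    exact mul_conj_self (f y)
  have := lhs ▸ rhs ▸ key
  exact_mod_cast this

lemma gsq_integrable (g : SchwartzMap ℝ ℂ) : Integrable (fun w : ℝ => ‖g w‖ ^ 2) := by
  obtain ⟨C, hC⟩ := g.decay 0 0
  have hC' : ∀ w : ℝ, ‖g w‖ ≤ C := by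
    intro w
    have := hC.2 w
    simpa [norm_iteratedFDeriv_zero] using this
  have hgn : Integrable (fun w : ℝ => ‖g w‖) := (g.integrable (μ := volume)).norm
  have := hgn.bdd_mul (c := C) (g.continuous.norm.aestronglyMeasurable) (Filter.Eventually.of_forall fun w => by
    simpa [Real.norm_eq_abs, _root_.abs_of_nonneg (norm_nonneg (g w))] using hC' w)
  simpa [pow_two] using this

lemma FT_norm_sq (f : SchwartzMap ℝ ℂ) (ξ : ℝ) :
    ‖FT (⇑f) ξ‖ ^ 2 = (2 * Real.pi)⁻¹ * ‖𝓕 (⇑f) ((2 * Real.pi)⁻¹ * ξ)‖ ^ 2 := by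
  have h2π : (0:ℝ) < 2 * Real.pi := by positivity
  rw [FT_eq_fourierIntegral, norm_smul, Real.norm_eq_abs,
    _root_.abs_of_nonneg (by positivity : (0:ℝ) ≤ (Real.sqrt (2 * Real.pi))⁻¹),
    mul_pow, inv_pow, Real.sq_sqrt h2π.le]

lemma FT_sq_integrable (f : SchwartzMap ℝ ℂ) :
    Integrable (fun ξ : ℝ => ‖FT (⇑f) ξ‖ ^ 2) := by
  have h2π : (0:ℝ) < 2 * Real.pi := by positivity
  set g : SchwartzMap ℝ ℂ := SchwartzMap.fourierTransformCLM ℂ f with hg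
  have hcomp : Integrable (fun ξ : ℝ => ‖g ((2 * Real.pi)⁻¹ * ξ)‖ ^ 2) :=
    (gsq_integrable g).comp_mul_left' (inv_ne_zero h2π.ne')
  have := hcomp.const_mul (2 * Real.pi)⁻¹
  refine this.congr (Filter.Eventually.of_forall fun ξ => ?_)
  exact (FT_norm_sq f ξ).symm

lemma FT_sq_integral (f : SchwartzMap ℝ ℂ) :
    ∫ ξ : ℝ, ‖FT (⇑f) ξ‖ ^ 2 = ∫ y : ℝ, ‖f y‖ ^ 2 := by
  have h2π : (0:ℝ) < 2 * Real.pi := by positivity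
  calc ∫ ξ : ℝ, ‖FT (⇑f) ξ‖ ^ 2
      = ∫ ξ : ℝ, (2 * Real.pi)⁻¹ * ‖𝓕 (⇑f) ((2 * Real.pi)⁻¹ * ξ)‖ ^ 2 := by
        refine integral_congr_ae (Filter.Eventually.of_forall fun ξ => ?_)
        exact FT_norm_sq f ξ
    _ = (2 * Real.pi)⁻¹ * ∫ ξ : ℝ, ‖𝓕 (⇑f) ((2 * Real.pi)⁻¹ * ξ)‖ ^ 2 := by
        rw [integral_const_mul]
    _ = (2 * Real.pi)⁻¹ * (|((2 * Real.pi)⁻¹)⁻¹| • ∫ w : ℝ, ‖𝓕 (⇑f) w‖ ^ 2) := by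
        rw [MeasureTheory.Measure.integral_comp_mul_left (fun w : ℝ => ‖𝓕 (⇑f) w‖ ^ 2) (2 * Real.pi)⁻¹]
    _ = ∫ w : ℝ, ‖𝓕 (⇑f) w‖ ^ 2 := by
        rw [inv_inv, abs_of_pos h2π, smul_eq_mul, ← mul_assoc, inv_mul_cancel₀ h2π.ne', one_mul]
    _ = ∫ y : ℝ, ‖f y‖ ^ 2 := plancherel_schwartz f

lemma weight_integrable {κ : ℝ} (hκ : 0 < κ) :
    Integrable (fun ξ : ℝ => ((|ξ| + κ)⁻¹) ^ 2) := by
  have hbase : Integrable (fun x : ℝ => (1 + (κ⁻¹ * x) ^ 2)⁻¹) := by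
    have h := integrable_inv_one_add_sq
    exact h.comp_mul_left' (inv_ne_zero hκ.ne')
  have hmeas : AEStronglyMeasurable (fun ξ : ℝ => ((|ξ| + κ)⁻¹) ^ 2) volume := by
    refine Continuous.aestronglyMeasurable ?_
    have h1 : Continuous fun ξ : ℝ => |ξ| + κ := continuous_abs.add continuous_const
    exact (h1.inv₀ fun ξ => by positivity).pow 2
  refine (hbase.const_mul (κ⁻¹ ^ 2)).mono' hmeas
    (Filter.Eventually.of_forall fun ξ => ?_)
  have hpos : (0:ℝ) < |ξ| + κ := by positivity
  have h1 : ‖((|ξ| + κ)⁻¹) ^ 2‖ = ((|ξ| + κ) ^ 2)⁻¹ := by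
    rw [Real.norm_eq_abs, _root_.abs_of_nonneg (by positivity), inv_pow]
  rw [h1]
  have h2 : κ⁻¹ ^ 2 * (1 + (κ⁻¹ * ξ) ^ 2)⁻¹ = (κ ^ 2 + ξ ^ 2)⁻¹ := by
    rw [eq_comm, inv_pow, ← mul_inv, eq_comm]
    congr 1
    field_simp
  rw [h2]
  have h3 : κ ^ 2 + ξ ^ 2 ≤ (|ξ| + κ) ^ 2 := by
    nlinarith [abs_nonneg ξ, _root_.sq_abs ξ, hκ.le]
  exact inv_anti₀ (by positivity) h3

lemma weight_integral {κ : ℝ} (hκ : 0 < κ) :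
    ∫ ξ : ℝ, ((|ξ| + κ)⁻¹) ^ 2 = 2 / κ := by
  have habs : ∫ ξ : ℝ, ((|ξ| + κ)⁻¹) ^ 2
      = 2 * ∫ ξ in Set.Ioi (0:ℝ), ((ξ + κ)⁻¹) ^ 2 :=
    integral_comp_abs (f := fun x => ((x + κ)⁻¹) ^ 2)
  have hF : ∀ y ∈ Set.Ioi (0:ℝ), HasDerivAt (fun y : ℝ => -(y + κ)⁻¹) (((y + κ)⁻¹) ^ 2) y := by
    intro y hy
    have hy0 : (0:ℝ) < y := hy
    have hne : y + κ ≠ 0 := by positivity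
    have h1 : HasDerivAt (fun y : ℝ => y + κ) 1 y := (hasDerivAt_id y).add_const κ
    have h2 := (h1.inv hne).neg
    rw [neg_div, neg_neg, one_div, ← inv_pow] at h2
    exact h2
  have hcont : ContinuousWithinAt (fun y : ℝ => -(y + κ)⁻¹) (Set.Ici (0:ℝ)) 0 := by
    refine ContinuousAt.continuousWithinAt ?_
    have hne : (0:ℝ) + κ ≠ 0 := by positivity
    exact (((continuous_id.add continuous_const).continuousAt).inv₀ hne).neg
  have hint : IntegrableOn (fun y : ℝ => ((y + κ)⁻¹) ^ 2) (Set.Ioi (0:ℝ)) := by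
    refine ((weight_integrable hκ).integrableOn).congr_fun (fun y hy => ?_) measurableSet_Ioi
    have : |y| = y := abs_of_pos hy
    simp only [this]
  have htend : Filter.Tendsto (fun y : ℝ => -(y + κ)⁻¹) Filter.atTop (nhds 0) := by
    rw [show (0:ℝ) = -0 by norm_num]
    exact (Filter.Tendsto.comp tendsto_inv_atTop_zero
      (Filter.tendsto_atTop_add_const_right Filter.atTop κ Filter.tendsto_id)).neg
  have hIoi := MeasureTheory.integral_Ioi_of_hasDerivAt_of_tendsto hcont hF hint htend
  rw [habs, hIoi]
  rw [zero_add]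
  field_simp
  ring

lemma rpow_two_eq (r : ℝ) : r ^ (2:ℝ) = r ^ 2 := by
  rw [show (2:ℝ) = ((2:ℕ) : ℝ) by norm_num, Real.rpow_natCast]

/-- Quantitative resolvent embedding: the operator `(|∂_x| + κ)⁻¹` maps `L²` into
`L^∞` with operator norm at most `(πκ)^{-1/2}`. -/
theorem resolvent_Linfty_bound (f : SchwartzMap ℝ ℂ) (κ : ℝ) (hκ : 0 < κ) (x : ℝ) :
    ‖(Real.sqrt (2 * Real.pi))⁻¹ •
        ∫ ξ : ℝ, (FT (⇑f) ξ / (((|ξ| + κ : ℝ)) : ℂ)) * Complex.exp (Complex.I * x * ξ)‖ ≤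
      (Real.sqrt (Real.pi * κ))⁻¹ * (∫ y : ℝ, ‖f y‖ ^ 2) ^ (1/2 : ℝ) := by
  have h2π : (0:ℝ) < 2 * Real.pi := by positivity
  set φ : ℝ → ℝ := fun ξ => ‖FT (⇑f) ξ‖ with hφdef
  set ψ : ℝ → ℝ := fun ξ => (|ξ| + κ)⁻¹ with hψdef
  -- pointwise norm identity
  have hptw : ∀ ξ : ℝ, ‖(FT (⇑f) ξ / (((|ξ| + κ : ℝ)) : ℂ)) * Complex.exp (Complex.I * x * ξ)‖
      = φ ξ * ψ ξ := by
    intro ξ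
    have hpos : (0:ℝ) < |ξ| + κ := by positivity
    rw [norm_mul, norm_div]
    have h1 : ‖Complex.exp (Complex.I * x * ξ)‖ = 1 := by
      rw [Complex.norm_exp]
      simp
    have h2 : ‖(((|ξ| + κ : ℝ)) : ℂ)‖ = |ξ| + κ := by
      rw [Complex.norm_real, Real.norm_eq_abs, _root_.abs_of_pos hpos]
    rw [h1, h2, mul_one, div_eq_mul_inv]
  -- continuity of FT f
  have hFTcont : Continuous (FT (⇑f)) := by
    have : Continuous fun ξ : ℝ => (Real.sqrt (2 * Real.pi))⁻¹ • (𝓕 ⇑f) ((2 * Real.pi)⁻¹ * ξ) :=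
      by exact (((SchwartzMap.fourierTransformCLM ℂ f).continuous).comp
        (continuous_const.mul continuous_id)).const_smul ((Real.sqrt (2 * Real.pi))⁻¹ : ℝ)
    refine Continuous.congr this fun ξ => (FT_eq_fourierIntegral (⇑f) ξ).symm
  -- Memℒp facts
  have hφmem : MemLp φ (ENNReal.ofReal 2) volume := by
    rw [show ENNReal.ofReal 2 = 2 by norm_num]
    exact (memLp_two_iff_integrable_sq hFTcont.norm.aestronglyMeasurable).2 (FT_sq_integrable f)
  have hψcont : Continuous ψ := by
    have h1 : Continuous fun ξ : ℝ => |ξ| + κ := continuous_abs.add continuous_const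
    exact h1.inv₀ fun ξ => by positivity
  have hψmem : MemLp ψ (ENNReal.ofReal 2) volume := by
    rw [show ENNReal.ofReal 2 = 2 by norm_num]
    refine (memLp_two_iff_integrable_sq hψcont.aestronglyMeasurable).2 ?_
    simpa [hψdef] using weight_integrable hκ
  -- Cauchy-Schwarz
  have hconj : Real.HolderConjugate 2 2 := Real.HolderConjugate.two_two
  have hCS := integral_mul_le_Lp_mul_Lq_of_nonneg hconj
      (Filter.Eventually.of_forall fun ξ => norm_nonneg _)
      (Filter.Eventually.of_forall fun ξ => by positivity) hφmem hψmem
  simp only [rpow_two_eq] at hCS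
  -- value of the two integrals
  have hval1 : ∫ a : ℝ, φ a ^ 2 = ∫ y : ℝ, ‖f y‖ ^ 2 := FT_sq_integral f
  have hval2 : ∫ a : ℝ, ψ a ^ 2 = 2 / κ := weight_integral hκ
  rw [hval1, hval2] at hCS
  -- assemble
  have hnn : (0:ℝ) ≤ ∫ y : ℝ, ‖f y‖ ^ 2 :=
    integral_nonneg fun y => by positivity
  calc ‖(Real.sqrt (2 * Real.pi))⁻¹ •
        ∫ ξ : ℝ, (FT (⇑f) ξ / (((|ξ| + κ : ℝ)) : ℂ)) * Complex.exp (Complex.I * x * ξ)‖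
      = (Real.sqrt (2 * Real.pi))⁻¹ *
        ‖∫ ξ : ℝ, (FT (⇑f) ξ / (((|ξ| + κ : ℝ)) : ℂ)) * Complex.exp (Complex.I * x * ξ)‖ := by
        rw [norm_smul, Real.norm_eq_abs, _root_.abs_of_nonneg (by positivity)]
    _ ≤ (Real.sqrt (2 * Real.pi))⁻¹ *
        ∫ ξ : ℝ, ‖(FT (⇑f) ξ / (((|ξ| + κ : ℝ)) : ℂ)) * Complex.exp (Complex.I * x * ξ)‖ := by
        refine mul_le_mul_of_nonneg_left (norm_integral_le_integral_norm _) (by positivity)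
    _ = (Real.sqrt (2 * Real.pi))⁻¹ * ∫ ξ : ℝ, φ ξ * ψ ξ := by
        rw [integral_congr_ae (Filter.Eventually.of_forall hptw)]
    _ ≤ (Real.sqrt (2 * Real.pi))⁻¹ *
        ((∫ y : ℝ, ‖f y‖ ^ 2) ^ (1/(2:ℝ)) * (2 / κ) ^ (1/(2:ℝ))) := by
        refine mul_le_mul_of_nonneg_left hCS (by positivity)
    _ = (Real.sqrt (Real.pi * κ))⁻¹ * (∫ y : ℝ, ‖f y‖ ^ 2) ^ (1/2 : ℝ) := by
        rw [← Real.sqrt_eq_rpow (2 / κ)]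
        have hi : (2:ℝ) / κ = (2 * Real.pi) / (Real.pi * κ) := by
          field_simp
        rw [hi, Real.sqrt_div h2π.le]
        have hs : Real.sqrt (2 * Real.pi) ≠ 0 := by positivity
        field_simp
end

section
/- The ground state R(x) = √2/(x+i) is a static solution of the focusing continuum Calogero–Moser equation with mass 2π. Precisely, let q(x) := −i/(x+i)² and r(x) := −4x/(1+x²)², so that |R(x)|² = 2/(1+x²) and r = ∂_x(|R|²). Then: (i) ∫_ℝ |R(x)|² dx = 2π; (ii) for every ξ ∈ ℝ, (2π)^{-1/2} ∫_ℝ q(x) e^{-iξx} dx = 1_{(0,∞)}(ξ) · (2π)^{-1/2} ∫_ℝ r(x) e^{-iξx} dx, i.e. q is exactly the positive-frequency part P₊∂_x(|R|²); and (iii) for every x ∈ ℝ, i·R″(x) = −2·R(x)·q(x), where R″(x) = 2√2/(x+i)³ is the second derivative of R. Hence u(t,x) = R(x) solves the focusing CCM equation ∂_t u + i∂_x²u = −2 u P₊∂_x(|u|²). -/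
open MeasureTheory Complex

/-- The ground state `R(x) = √2/(x+i)` of the focusing continuum Calogero–Moser
equation. -/
noncomputable def Rgs : ℝ → ℂ := fun x => ((Real.sqrt 2 : ℝ) : ℂ) / ((x : ℂ) + Complex.I)

/-- `q(x) = −i/(x+i)²`, which is exactly `P₊∂_x(|R|²)`. -/
noncomputable def qgs : ℝ → ℂ := fun x => -Complex.I / (((x : ℂ) + Complex.I) ^ 2)

/-- `r(x) = −4x/(1+x²)² = ∂_x(|R|²)`. -/
noncomputable def rgs : ℝ → ℂ := fun x => ((-4 * x / (1 + x ^ 2) ^ 2 : ℝ) : ℂ)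


open Set Filter Topology
open scoped FourierTransform Real



lemma key_integrable (c : ℂ) (hc : 0 < c.re) :
    IntegrableOn (fun t : ℝ => (t : ℂ) * Complex.exp (-(c * t))) (Set.Ioi 0) := by
  have hb : IntegrableOn (fun t : ℝ => t ^ (1:ℝ) * Real.exp (-c.re * t ^ (1:ℝ))) (Set.Ioi 0) :=
    integrableOn_rpow_mul_exp_neg_mul_rpow (by norm_num) (by norm_num) hc
  refine Integrable.mono' hb ?_ ?_
  · exact (Complex.continuous_ofReal.mul
      (Complex.continuous_exp.comp (by continuity))).aestronglyMeasurable.restrict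
  · filter_upwards [ae_restrict_mem measurableSet_Ioi] with t ht
    have : ‖(t : ℂ) * Complex.exp (-(c * t))‖ = |t| * Real.exp (-(c.re * t)) := by
      simp [norm_mul, Complex.norm_exp, Complex.norm_real]
    rw [this, abs_of_pos (mem_Ioi.mp ht)]
    simp [Real.rpow_one, neg_mul]

-- key integral: ∫_{0}^{∞} t e^{-ct} dt = 1/c² for Re c > 0
lemma key_int (c : ℂ) (hc : 0 < c.re) :
    ∫ t in Set.Ioi (0:ℝ), (t : ℂ) * Complex.exp (-(c * t)) = 1 / c ^ 2 := by
  have hc0 : c ≠ 0 := fun h => by simp [h] at hc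
  set F : ℝ → ℂ := fun t => -((t : ℂ) / c + 1 / c ^ 2) * Complex.exp (-(c * t)) with hF
  have hderiv : ∀ t ∈ Set.Ici (0:ℝ), HasDerivAt F ((t:ℂ) * Complex.exp (-(c * t))) t := by
    intro t _
    have h1 : HasDerivAt (fun t : ℝ => -((t : ℂ) / c + 1 / c ^ 2)) (-(1/c)) t := by
      have := ((Complex.ofRealCLM.hasDerivAt (x := t)).div_const c).add_const (1 / c ^ 2)
      have h := this.neg
      simp only [Complex.ofRealCLM_apply, Complex.ofReal_one] at h
      exact h
    have h2 : HasDerivAt (fun t : ℝ => Complex.exp (-(c * t))) (-c * Complex.exp (-(c * t))) t := by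
      have hexp : HasDerivAt (fun z : ℂ => Complex.exp (-(c * z))) (-c * Complex.exp (-(c * t))) (t:ℂ) := by
        have := (((hasDerivAt_id (t:ℂ)).const_mul c).neg).cexp
        refine this.congr_deriv ?_
        simp only [Pi.neg_apply, id, mul_one]; ring
      exact hexp.comp_ofReal
    have := h1.mul h2
    refine this.congr_deriv ?_
    field_simp
    ring
  have htend : Tendsto F atTop (𝓝 0) := by
    rw [tendsto_zero_iff_norm_tendsto_zero]
    have hg : Tendsto (fun t : ℝ => (t / ‖c‖ + 1 / ‖c‖ ^ 2) * Real.exp (-c.re * t)) atTop (𝓝 0) := by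
      have h1 : Tendsto (fun t : ℝ => t * Real.exp (-c.re * t) / ‖c‖) atTop (𝓝 0) := by
        have := tendsto_rpow_mul_exp_neg_mul_atTop_nhds_zero 1 c.re hc
        have h' := this.div_const ‖c‖
        rw [zero_div] at h'
        refine h'.congr' ?_
        filter_upwards [eventually_gt_atTop (0:ℝ)] with t ht
        rw [Real.rpow_one]
      have h2 : Tendsto (fun t : ℝ => (1 / ‖c‖ ^ 2) * Real.exp (-c.re * t)) atTop (𝓝 0) := by
        have : Tendsto (fun t : ℝ => Real.exp (-c.re * t)) atTop (𝓝 0) := by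
          apply Real.tendsto_exp_atBot.comp
          exact (tendsto_const_mul_atBot_of_neg (by linarith)).mpr tendsto_id
        have := this.const_mul (1 / ‖c‖ ^ 2)
        rw [mul_zero] at this
        exact this
      have := h1.add h2
      rw [add_zero] at this
      refine this.congr fun t => by ring
    refine squeeze_zero' ?_ ?_ hg
    · filter_upwards with t; positivity
    · filter_upwards [eventually_ge_atTop (0:ℝ)] with t ht
      have hnorm : ‖F t‖ = ‖(t : ℂ) / c + 1 / c ^ 2‖ * Real.exp (-(c.re * t)) := by
        rw [hF]
        simp [norm_mul, Complex.norm_exp, Complex.mul_re]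
        rw [show -(c ^ 2)⁻¹ + -((t:ℂ) / c) = -((t:ℂ) / c + (c ^ 2)⁻¹) by ring, norm_neg]
      rw [hnorm]
      have hb : ‖(t : ℂ) / c + 1 / c ^ 2‖ ≤ t / ‖c‖ + 1 / ‖c‖ ^ 2 := by
        refine (norm_add_le _ _).trans ?_
        have e1 : ‖(t : ℂ) / c‖ = |t| / ‖c‖ := by
          simp [norm_div, Complex.norm_real]
        have e2 : ‖(1 : ℂ) / c ^ 2‖ = 1 / ‖c‖ ^ 2 := by
          simp [norm_div, norm_pow]
        rw [e1, e2, _root_.abs_of_nonneg ht]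
      have hexp : (0:ℝ) < Real.exp (-(c.re * t)) := Real.exp_pos _
      calc ‖(t : ℂ) / c + 1 / c ^ 2‖ * Real.exp (-(c.re * t))
          ≤ (t / ‖c‖ + 1 / ‖c‖ ^ 2) * Real.exp (-(c.re * t)) := by
            exact mul_le_mul_of_nonneg_right hb hexp.le
        _ = (t / ‖c‖ + 1 / ‖c‖ ^ 2) * Real.exp (-c.re * t) := by rw [neg_mul]
  have := integral_Ioi_of_hasDerivAt_of_tendsto' hderiv (key_integrable c hc) htend
  rw [this]
  simp [hF]

noncomputable def gfun : ℝ → ℂ := fun t => ((max t 0 : ℝ) : ℂ) * Complex.exp (-(t : ℂ))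


lemma gfun_eq_indicator : gfun = Set.indicator (Set.Ioi (0:ℝ))
    (fun t : ℝ => (t : ℂ) * Complex.exp (-(((1:ℂ)) * t))) := by
  funext t
  rcases le_or_gt t 0 with h | h
  · simp [gfun, max_eq_right h, Set.indicator_apply, not_lt.mpr h]
  · simp [gfun, max_eq_left h.le, Set.indicator_of_mem (mem_Ioi.mpr h)]

lemma gfun_cont : Continuous gfun :=
  (Complex.continuous_ofReal.comp (continuous_id.max continuous_const)).mul
    (Complex.continuous_exp.comp (Complex.continuous_ofReal.neg))

lemma gfun_integrable : Integrable gfun := by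
  rw [gfun_eq_indicator]
  rw [integrable_indicator_iff measurableSet_Ioi]
  exact key_integrable 1 (by norm_num)

lemma fourier_gfun (w : ℝ) : 𝓕 gfun w = 1 / ((1:ℂ) + 2 * π * w * Complex.I) ^ 2 := by
  set c : ℂ := (1:ℂ) + 2 * π * w * Complex.I with hcdef
  have hcre : 0 < c.re := by simp [hcdef]
  rw [Real.fourier_real_eq_integral_exp_smul]
  have hpt : ∀ v : ℝ, Complex.exp (↑(-2 * π * v * w) * Complex.I) • gfun v
      = Set.indicator (Set.Ioi (0:ℝ)) (fun v : ℝ => (v:ℂ) * Complex.exp (-(c * v))) v := by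
    intro v
    rcases le_or_gt v 0 with h | h
    · simp [gfun, max_eq_right h, Set.indicator_apply, not_lt.mpr h]
    · rw [Set.indicator_of_mem (mem_Ioi.mpr h)]
      simp only [gfun, smul_eq_mul, max_eq_left h.le]
      rw [mul_comm, mul_assoc, ← Complex.exp_add]
      congr 2
      rw [hcdef]
      push_cast
      ring
  rw [integral_congr_ae (Eventually.of_forall hpt), integral_indicator measurableSet_Ioi]
  exact key_int c hcre

lemma fourier_gfun_integrable : Integrable (𝓕 gfun) := by
  have heq : 𝓕 gfun = fun w : ℝ => 1 / ((1:ℂ) + 2 * π * w * Complex.I) ^ 2 :=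
    funext fourier_gfun
  rw [heq]
  have hcont : Continuous fun w : ℝ => 1 / ((1:ℂ) + 2 * π * w * Complex.I) ^ 2 := by
    apply continuous_const.div
    · continuity
    · intro w h
      rw [pow_eq_zero_iff two_ne_zero] at h
      have := congrArg Complex.re h
      simp at this
  refine integrable_inv_one_add_sq.mono' hcont.aestronglyMeasurable ?_
  filter_upwards with w
  have habs : ‖((1:ℂ) + 2 * π * w * Complex.I)‖ ^ 2 = 1 + (2*π*w)^2 := by
    rw [← Complex.normSq_eq_norm_sq, Complex.normSq_apply]
    simp
    ring
  rw [norm_div, norm_one, norm_pow, habs, one_div]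
  rw [inv_le_inv₀ (by positivity) (by positivity)]
  have h4 : (1:ℝ) ≤ 4 * π^2 := by nlinarith [Real.pi_gt_three]
  nlinarith [sq_nonneg w]


lemma J_formula (ξ : ℝ) :
    (∫ x : ℝ, qgs x * Complex.exp (-(Complex.I * x * ξ)))
      = 2 * π * Complex.I * gfun ξ := by
  have hinv : 𝓕 (𝓕 gfun) (-ξ) = gfun ξ := by
    rw [← Real.fourierInv_eq_fourier_neg]
    rw [gfun_cont.fourierInv_fourier_eq gfun_integrable fourier_gfun_integrable]
  -- unfold 𝓕 (𝓕 gfun) (-ξ)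
  rw [Real.fourier_real_eq_integral_exp_smul] at hinv
  -- integrand as composition with x ↦ -2π x
  have hcomp : ∀ x : ℝ,
      Complex.exp (↑(-2 * π * x * (-ξ)) * Complex.I) • 𝓕 gfun x
        = (fun u : ℝ => qgs u * Complex.exp (-(Complex.I * u * ξ)) * (-Complex.I)) ((-2 * π) * x) := by
    intro x
    rw [fourier_gfun]
    simp only [smul_eq_mul, qgs]
    have h1 : ((1:ℂ) + 2 * π * x * Complex.I) ^ 2
        = -((((-2 * π * x : ℝ) : ℂ) + Complex.I) ^ 2) := by
      push_cast
      ring_nf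
      rw [Complex.I_sq]
      ring
    rw [h1]
    have h2 : (((-2 * π * x : ℝ) : ℂ) + Complex.I) ≠ 0 := by
      intro h
      have := congrArg Complex.im h
      simp at this
    have h3 : Complex.exp (-(Complex.I * ((-2 * π * x : ℝ) : ℂ) * ξ))
        = Complex.exp (↑(-2 * π * x * (-ξ)) * Complex.I) := by
      congr 1
      push_cast
      ring
    rw [h3]
    rw [show (-Complex.I : ℂ) / ((((-2 * π * x : ℝ) : ℂ)) + Complex.I) ^ 2
          * Complex.exp (↑(-2 * π * x * -ξ) * Complex.I) * -Complex.I
        = Complex.exp (↑(-2 * π * x * -ξ) * Complex.I)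
          * ((Complex.I * Complex.I) / ((((-2 * π * x : ℝ) : ℂ)) + Complex.I) ^ 2) by ring,
      Complex.I_mul_I, div_neg, neg_div]
  rw [integral_congr_ae (Eventually.of_forall hcomp)] at hinv
  rw [MeasureTheory.Measure.integral_comp_mul_left
    (fun u : ℝ => qgs u * Complex.exp (-(Complex.I * u * ξ)) * (-Complex.I)) (-2 * π)] at hinv
  rw [integral_mul_const] at hinv
  have habs : |(-2 * π : ℝ)⁻¹| = (2 * π)⁻¹ := by
    rw [abs_inv, abs_of_neg (by nlinarith [Real.pi_pos])]
    norm_num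
  rw [habs] at hinv
  have h2pi : ((2 * π : ℝ) : ℂ) ≠ 0 := by
    norm_cast
    nlinarith [Real.pi_pos]
  rw [← hinv]
  rw [show ((2 * π : ℝ)⁻¹ : ℝ) • ((∫ y : ℝ, qgs y * Complex.exp (-(Complex.I * y * ξ))) * (-Complex.I))
      = ((2 * π : ℝ) : ℂ)⁻¹ * ((∫ y : ℝ, qgs y * Complex.exp (-(Complex.I * y * ξ))) * (-Complex.I)) by
    rw [Complex.real_smul]; push_cast; ring]
  rw [mul_comm]
  have h2pi' : (2:ℂ) * (π:ℂ) ≠ 0 := by push_cast at h2pi; exact h2pi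
  generalize (∫ x : ℝ, qgs x * Complex.exp (-(Complex.I * x * ξ))) = J
  push_cast
  field_simp
  linear_combination J * Complex.I_mul_I


lemma hne (x : ℝ) : ((x : ℂ) + Complex.I) ≠ 0 := by
  intro h
  have := congrArg Complex.im h
  simp at this

lemma hne' (x : ℝ) : ((x : ℂ) - Complex.I) ≠ 0 := by
  intro h
  have := congrArg Complex.im h
  simp at this

-- part (i)
lemma mass : (∫ x : ℝ, ‖Rgs x‖ ^ 2) = 2 * Real.pi := by
  have hpt : ∀ x : ℝ, ‖Rgs x‖ ^ 2 = 2 * (1 + x ^ 2)⁻¹ := by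
    intro x
    rw [Rgs]
    rw [norm_div, div_pow, Complex.norm_real, Real.norm_eq_abs,
      _root_.abs_of_nonneg (Real.sqrt_nonneg 2), Real.sq_sqrt (by norm_num)]
    rw [Complex.sq_norm, Complex.normSq_apply]
    simp
    rw [div_eq_mul_inv]
    congr 1
    ring
  rw [funext hpt, MeasureTheory.integral_const_mul, integral_univ_inv_one_add_sq]

-- part (iii)
lemma derivs (x : ℝ) :
    deriv (deriv Rgs) x = (2 * ((Real.sqrt 2 : ℝ) : ℂ)) / (((x : ℂ) + Complex.I) ^ 3) ∧
    Complex.I * deriv (deriv Rgs) x = -2 * Rgs x * qgs x := by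
  set c : ℂ := ((Real.sqrt 2 : ℝ) : ℂ)
  have h1 : ∀ y : ℝ, HasDerivAt Rgs (-c / (((y : ℂ) + Complex.I) ^ 2)) y := by
    intro y
    have hz : HasDerivAt (fun z : ℂ => c / (z + Complex.I))
        ((0 * ((y:ℂ) + Complex.I) - c * 1) / (((y:ℂ) + Complex.I) ^ 2)) (y : ℂ) := by
      exact (hasDerivAt_const _ c).div ((hasDerivAt_id (y:ℂ)).add_const Complex.I) (hne y)
    have := hz.comp_ofReal
    show HasDerivAt (fun y : ℝ => c / ((y:ℂ) + Complex.I)) _ y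
    simpa using this
  have hd1 : deriv Rgs = fun y : ℝ => -c / (((y : ℂ) + Complex.I) ^ 2) :=
    funext fun y => (h1 y).deriv
  have h2 : ∀ y : ℝ, HasDerivAt (fun y : ℝ => -c / (((y : ℂ) + Complex.I) ^ 2))
      (2 * c / (((y : ℂ) + Complex.I) ^ 3)) y := by
    intro y
    have hz : HasDerivAt (fun z : ℂ => -c / ((z + Complex.I) ^ 2))
        ((0 * ((y:ℂ) + Complex.I) ^ 2 - (-c) * (2 * ((y:ℂ) + Complex.I) ^ 1 * 1))
          / ((((y:ℂ) + Complex.I) ^ 2) ^ 2)) (y : ℂ) := by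
      exact (hasDerivAt_const _ (-c)).div
        (((hasDerivAt_id (y:ℂ)).add_const Complex.I).pow 2) (pow_ne_zero 2 (hne y))
    have := hz.comp_ofReal
    convert this using 1
    rw [zero_mul, zero_sub, pow_one, mul_one]
    field_simp [hne y]
  have hd2 : deriv (deriv Rgs) x = 2 * c / (((x : ℂ) + Complex.I) ^ 3) := by
    rw [hd1]
    exact (h2 x).deriv
  refine ⟨hd2, ?_⟩
  rw [hd2, Rgs, qgs]
  field_simp [hne x]
  ring

lemma norm_qgs_mul_exp (x ξ : ℝ) :
    ‖qgs x * Complex.exp (-(Complex.I * x * ξ))‖ = (1 + x ^ 2)⁻¹ := by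
  rw [norm_mul]
  have h1 : ‖Complex.exp (-(Complex.I * x * ξ))‖ = 1 := by
    rw [Complex.norm_exp]
    have : (-(Complex.I * x * ξ)).re = 0 := by simp [Complex.mul_re]
    rw [this, Real.exp_zero]
  rw [h1, mul_one, qgs, norm_div, norm_neg, Complex.norm_I,
    norm_pow, Complex.sq_norm, Complex.normSq_apply]
  simp
  ring

lemma cont_qgs_mul_exp (ξ : ℝ) :
    Continuous fun x : ℝ => qgs x * Complex.exp (-(Complex.I * x * ξ)) := by
  apply Continuous.mul
  · apply continuous_const.div
    · continuity
    · exact fun x => pow_ne_zero 2 (hne x)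
  · apply Complex.continuous_exp.comp
    continuity

lemma qgs_mul_exp_integrable (ξ : ℝ) :
    Integrable fun x : ℝ => qgs x * Complex.exp (-(Complex.I * x * ξ)) := by
  refine integrable_inv_one_add_sq.mono'
    (cont_qgs_mul_exp ξ).aestronglyMeasurable ?_
  filter_upwards with x
  rw [norm_qgs_mul_exp]

lemma conj_qgs_mul_exp_integrable (ξ : ℝ) :
    Integrable fun x : ℝ =>
      (starRingEnd ℂ) (qgs x * Complex.exp (-(Complex.I * x * ((-ξ : ℝ) : ℂ)))) := by
  refine integrable_inv_one_add_sq.mono'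
    (Complex.continuous_conj.comp (cont_qgs_mul_exp (-ξ))).aestronglyMeasurable ?_
  filter_upwards with x
  rw [RCLike.norm_conj, norm_qgs_mul_exp]

lemma one_add_sq_ne (x : ℝ) : ((1:ℂ) + (x:ℂ) ^ 2) ≠ 0 := by
  have h : ((x:ℂ) + Complex.I) * ((x:ℂ) - Complex.I) = 1 + (x:ℂ) ^ 2 := by
    have hI := Complex.I_sq
    linear_combination -hI
  rw [← h]
  exact mul_ne_zero (hne x) (hne' x)

lemma rgs_eq (x : ℝ) : rgs x = qgs x + (starRingEnd ℂ) (qgs x) := by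
  rw [Complex.add_conj, rgs]
  have h3 : Complex.normSq ((((x:ℂ)) + Complex.I) ^ 2) = (1 + x ^ 2) ^ 2 := by
    rw [map_pow, Complex.normSq_apply]
    simp
    ring
  have hre : (qgs x).re = -2 * x / (1 + x ^ 2) ^ 2 := by
    rw [qgs, Complex.div_re, h3]
    have h1 : ((((x:ℂ)) + Complex.I) ^ 2).re = x ^ 2 - 1 := by
      simp [pow_two, Complex.mul_re]
    have h2 : ((((x:ℂ)) + Complex.I) ^ 2).im = 2 * x := by
      simp [pow_two, Complex.mul_im]
      ring
    rw [h1, h2]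
    simp
  rw [hre]
  push_cast
  ring

lemma part2 (ξ : ℝ) : FT qgs ξ = (if 0 < ξ then (1 : ℂ) else 0) * FT rgs ξ := by
  have hJr : (∫ x : ℝ, rgs x * Complex.exp (-(Complex.I * x * ξ)))
      = (∫ x : ℝ, qgs x * Complex.exp (-(Complex.I * x * ξ)))
        + (starRingEnd ℂ) (∫ x : ℝ, qgs x * Complex.exp (-(Complex.I * x * ((-ξ : ℝ) : ℂ)))) := by
    have h1 : ∀ x : ℝ, rgs x * Complex.exp (-(Complex.I * x * ξ))
        = qgs x * Complex.exp (-(Complex.I * x * ξ))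
          + (starRingEnd ℂ) (qgs x * Complex.exp (-(Complex.I * x * ((-ξ : ℝ) : ℂ)))) := by
      intro x
      rw [rgs_eq x, map_mul]
      have h2 : (starRingEnd ℂ) (Complex.exp (-(Complex.I * x * ((-ξ : ℝ) : ℂ))))
          = Complex.exp (-(Complex.I * x * ξ)) := by
        rw [← Complex.exp_conj]
        congr 1
        simp only [map_neg, map_mul, Complex.conj_I, Complex.conj_ofReal]
        push_cast
        ring
      rw [h2]
      ring
    rw [integral_congr_ae (Filter.Eventually.of_forall h1),
      integral_add (qgs_mul_exp_integrable ξ) (conj_qgs_mul_exp_integrable ξ),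
      integral_conj]
  by_cases hξ : 0 < ξ
  · rw [if_pos hξ, one_mul]
    unfold FT
    congr 1
    rw [hJr, J_formula (-ξ)]
    have hg0 : gfun (-ξ) = 0 := by
      simp [gfun, max_eq_right (by linarith : -ξ ≤ (0:ℝ))]
    rw [hg0, mul_zero, map_zero, add_zero]
  · rw [if_neg hξ, zero_mul]
    unfold FT
    rw [J_formula ξ]
    have hg0 : gfun ξ = 0 := by
      simp [gfun, max_eq_right (le_of_not_gt hξ)]
    rw [hg0, mul_zero, smul_zero]

/-- The ground state `R(x) = √2/(x+i)` is a static solution of the focusing CCM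
equation with mass `2π`: (i) `∫|R|² = 2π`; (ii) `q̂(ξ) = 1_{(0,∞)}(ξ)·r̂(ξ)`, i.e.
`q = P₊∂_x(|R|²)`; (iii) `i·R″ = −2·R·q`, with `R″(x) = 2√2/(x+i)³`. Hence
`u(t,x) = R(x)` solves `∂_t u + i∂_x²u = −2 u P₊∂_x(|u|²)`. -/
theorem ground_state_static :
    ((∫ x : ℝ, ‖Rgs x‖ ^ 2) = 2 * Real.pi) ∧
    (∀ ξ : ℝ, FT qgs ξ = (if 0 < ξ then (1 : ℂ) else 0) * FT rgs ξ) ∧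
    (∀ x : ℝ,
      deriv (deriv Rgs) x = (2 * ((Real.sqrt 2 : ℝ) : ℂ)) / (((x : ℂ) + Complex.I) ^ 3) ∧
      Complex.I * deriv (deriv Rgs) x = -2 * Rgs x * qgs x) := by
  exact ⟨mass, part2, derivs⟩
end
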